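/- Let G be a directed graph with V(G) = V(G_1) ∪ V(G_2) ∪ {x_k} (disjoint), such that there are no edges between V(G_1) and V(G_2). Then minrank_q(G_1) + minrank_q(G_2) ≤ minrank_q(G) ≤ minrank_q(G_1) + minrank_q(G_2) + 1. -/

import Mathlib

/-!
A fitting matrix of `G` restricted to `V(G₁) ⊔ V(G₂)` is still fitting, and it is block
diagonal because there are no edges between the two parts; its rank is therefore at least
`minrank(G₁) + minrank(G₂)`. Conversely, the block-diagonal matrix `diag(A₁, A₂, 1)` built
from optimal fitting matrices of `G₁` and `G₂` fits `G`, whatever the edges at `x_k` are.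
-/

/-- A matrix `A` fits a directed graph with edge relation `E` if it has 1's on the
diagonal and 0's at off-diagonal non-edges. -/
def Fits {V : Type*} {F : Type*} [Field F] (E : V → V → Prop)
    (A : Matrix V V F) : Prop :=
  (∀ v, A v v = 1) ∧ ∀ u v, u ≠ v → ¬ E u v → A u v = 0

/-- The minrank over `F` of the directed graph with edge relation `E`. -/
noncomputable def minrank (F : Type*) [Field F] {V : Type*} [Fintype V]
    (E : V → V → Prop) : ℕ :=
  sInf {r | ∃ A : Matrix V V F, Fits E A ∧ A.rank = r}

open Function Matrix Module

section

variable {F : Type*} [Field F]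

theorem Submodule.finrank_prod {M M₂ : Type*} [AddCommGroup M] [AddCommGroup M₂]
    [Module F M] [Module F M₂] (p : Submodule F M) (q : Submodule F M₂)
    [FiniteDimensional F p] [FiniteDimensional F q] :
    finrank F (p.prod q) = finrank F p + finrank F q := by
  have hinj : Injective (p.subtype.prodMap q.subtype) :=
    Prod.map_injective.mpr ⟨p.injective_subtype, q.injective_subtype⟩
  rw [← Module.finrank_prod, ← LinearMap.finrank_range_of_inj hinj, LinearMap.range_prodMap,
    Submodule.range_subtype, Submodule.range_subtype]

theorem Matrix.rank_fromBlocks_zero_zero {m m' n n' : Type*} [Fintype n] [Fintype n']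
    (A : Matrix m n F) (B : Matrix m' n' F) :
    (fromBlocks A 0 0 B).rank = A.rank + B.rank := by
  have hlin : (fromBlocks A 0 0 B).mulVecLin =
      (LinearEquiv.sumArrowLequivProdArrow m m' F F).symm.toLinearMap ∘ₗ
        A.mulVecLin.prodMap B.mulVecLin ∘ₗ
          (LinearEquiv.sumArrowLequivProdArrow n n' F F).toLinearMap := by
    ext x (i | i) <;> simp [fromBlocks_mulVec] <;> rfl
  rw [rank, hlin, LinearMap.range_comp, LinearMap.range_comp, LinearEquiv.range,
    Submodule.map_top, LinearEquiv.finrank_map_eq, LinearMap.range_prodMap,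
    Submodule.finrank_prod]
  rfl

section Fits

variable {V W α β : Type*}

theorem fits_one [DecidableEq V] (E : V → V → Prop) : Fits E (1 : Matrix V V F) :=
  ⟨fun _ => one_apply_eq _, fun _ _ h _ => one_apply_ne h⟩

theorem Fits.submatrix {E : V → V → Prop} {A : Matrix V V F} (hA : Fits E A) {f : W → V}
    (hf : Injective f) : Fits (fun u v => E (f u) (f v)) (A.submatrix f f) :=
  ⟨fun v => hA.1 (f v), fun _ _ huv hE => hA.2 _ _ (hf.ne huv) hE⟩

theorem Fits.fromBlocks {E : α ⊕ β → α ⊕ β → Prop} {A : Matrix α α F}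
    {B : Matrix β β F}
    (hA : Fits (fun a b => E (.inl a) (.inl b)) A)
    (hB : Fits (fun a b => E (.inr a) (.inr b)) B) :
    Fits E (fromBlocks A 0 0 B) := by
  refine ⟨?_, ?_⟩
  · rintro (a | b)
    exacts [hA.1 a, hB.1 b]
  · rintro (a | b) (a' | b') huv hE
    exacts [hA.2 a a' (ne_of_apply_ne _ huv) hE, rfl, rfl, hB.2 b b' (ne_of_apply_ne _ huv) hE]

theorem Fits.eq_fromBlocks_of_no_edges {E : α ⊕ β → α ⊕ β → Prop}
    {A : Matrix (α ⊕ β) (α ⊕ β) F}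
    (hA : Fits E A) (hno : ∀ a b, ¬ E (.inl a) (.inr b) ∧ ¬ E (.inr b) (.inl a)) :
    A = Matrix.fromBlocks (A.submatrix .inl .inl) 0 0 (A.submatrix .inr .inr) := by
  ext (a | b) (a' | b')
  · rfl
  · exact hA.2 _ _ Sum.inl_ne_inr (hno a b').1
  · exact hA.2 _ _ Sum.inr_ne_inl (hno a' b).2
  · rfl

end Fits

section Minrank

variable {V W α β : Type*} [Fintype V] [Fintype W] [Fintype α] [Fintype β]

theorem Fits.minrank_le {E : V → V → Prop} {A : Matrix V V F} (h : Fits E A) :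
    minrank F E ≤ A.rank :=
  Nat.sInf_le ⟨A, h, rfl⟩

theorem exists_fits_rank_eq_minrank (E : V → V → Prop) :
    ∃ A : Matrix V V F, Fits E A ∧ A.rank = minrank F E := by
  classical
  exact Nat.sInf_mem (s := {r | ∃ A : Matrix V V F, Fits E A ∧ A.rank = r})
    ⟨_, 1, fits_one E, rfl⟩

theorem minrank_le_card (E : V → V → Prop) : minrank F E ≤ Fintype.card V := by
  classical
  simpa using (fits_one (F := F) E).minrank_le

theorem minrank_comap_le (E : V → V → Prop) {f : W → V} (hf : Injective f) :
    minrank F (fun u v => E (f u) (f v)) ≤ minrank F E := by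
  obtain ⟨A, hA, hr⟩ := exists_fits_rank_eq_minrank (F := F) E
  exact (hA.submatrix hf).minrank_le.trans (hr ▸ rank_submatrix_le A f f)

theorem minrank_comap_equiv (E : V → V → Prop) (e : W ≃ V) :
    minrank F (fun u v => E (e u) (e v)) = minrank F E :=
  le_antisymm (minrank_comap_le E e.injective) <| by
    simpa using minrank_comap_le (F := F) (fun u v => E (e u) (e v)) e.symm.injective

theorem minrank_sum_le (E : α ⊕ β → α ⊕ β → Prop) :
    minrank F E ≤
      minrank F (fun a b => E (.inl a) (.inl b)) + minrank F (fun a b => E (.inr a) (.inr b)) := by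
  obtain ⟨A, hA, hrA⟩ := exists_fits_rank_eq_minrank (F := F) fun a b => E (.inl a) (.inl b)
  obtain ⟨B, hB, hrB⟩ := exists_fits_rank_eq_minrank (F := F) fun a b => E (.inr a) (.inr b)
  exact (hA.fromBlocks hB).minrank_le.trans_eq (by rw [rank_fromBlocks_zero_zero, hrA, hrB])

theorem add_minrank_le_minrank_sum (E : α ⊕ β → α ⊕ β → Prop)
    (hno : ∀ a b, ¬ E (.inl a) (.inr b) ∧ ¬ E (.inr b) (.inl a)) :
    minrank F (fun a b => E (.inl a) (.inl b)) + minrank F (fun a b => E (.inr a) (.inr b)) ≤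
      minrank F E := by
  obtain ⟨A, hA, hr⟩ := exists_fits_rank_eq_minrank (F := F) E
  calc _ ≤ (A.submatrix .inl .inl).rank + (A.submatrix .inr .inr).rank :=
        add_le_add (hA.submatrix Sum.inl_injective).minrank_le
          (hA.submatrix Sum.inr_injective).minrank_le
    _ = A.rank := by rw [← rank_fromBlocks_zero_zero, ← hA.eq_fromBlocks_of_no_edges hno]
    _ = minrank F E := hr

end Minrank

end

theorem minrank_two_part_plus_vertex_bounds {V : Type*} [Fintype V] {F : Type*} [Field F]
    (E : V → V → Prop) (S₁ S₂ : Set V) (k : V)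
    [DecidablePred (· ∈ S₁)] [DecidablePred (· ∈ S₂)]
    (h12 : Disjoint S₁ S₂) (hk1 : k ∉ S₁) (hk2 : k ∉ S₂)
    (hcover : S₁ ∪ S₂ ∪ {k} = Set.univ)
    (hno : ∀ u ∈ S₁, ∀ v ∈ S₂, ¬ E u v ∧ ¬ E v u) :
    minrank F (fun u v : S₁ => E u.1 v.1) + minrank F (fun u v : S₂ => E u.1 v.1)
        ≤ minrank F E ∧
    minrank F E ≤ minrank F (fun u v : S₁ => E u.1 v.1)
        + minrank F (fun u v : S₂ => E u.1 v.1) + 1 := by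
  set f : S₁ ⊕ S₂ → V := Sum.elim Subtype.val Subtype.val
  have hf : Injective f := Subtype.val_injective.sumElim Subtype.val_injective
    fun u v huv => h12.ne_of_mem u.2 v.2 huv
  set g : (S₁ ⊕ S₂) ⊕ Unit → V := Sum.elim f fun _ => k
  have hg : Bijective g := by
    refine ⟨hf.sumElim (injective_of_subsingleton _) ?_, fun v => ?_⟩
    · rintro (u | u) - rfl
      exacts [hk1 u.2, hk2 u.2]
    · rcases hcover.symm ▸ Set.mem_univ v with (hv | hv) | rfl
      exacts [⟨.inl (.inl ⟨v, hv⟩), rfl⟩, ⟨.inl (.inr ⟨v, hv⟩), rfl⟩,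
        ⟨.inr (), rfl⟩]
  refine ⟨?_, ?_⟩
  · calc _ ≤ minrank F (fun u v => E (f u) (f v)) :=
          add_minrank_le_minrank_sum _ fun u v => hno u u.2 v v.2
      _ ≤ minrank F E := minrank_comap_le E hf
  · calc minrank F E = minrank F (fun u v => E (g u) (g v)) :=
          (minrank_comap_equiv E (Equiv.ofBijective g hg)).symm
      _ ≤ minrank F (fun u v => E (f u) (f v)) + minrank F (fun _ _ : Unit => E k k) :=
          minrank_sum_le _
      _ ≤ _ := add_le_add (minrank_sum_le _) ((minrank_le_card _).trans_eq Fintype.card_unit)
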